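/- No nontrivial semigroup of analytic functions induces a strongly continuous semigroup of weighted composition operators on H(p,∞,α): if G is the generator of a semigroup {φ_t} on 𝔻 and the multiplier f ↦ G·f maps H(p,∞,α) boundedly into H(p,∞,α−1), then G ≡ 0. -/

import Mathlib

open Complex Metric Set Filter

noncomputable def Mp (p r : ℝ) (f : ℂ → ℂ) : ℝ :=
  ((1 / (2 * Real.pi)) * ∫ θ in (0:ℝ)..(2 * Real.pi),
    ‖f ((r : ℂ) * Complex.exp (θ * Complex.I))‖ ^ p) ^ (1 / p)

section Aux
open MeasureTheory intervalIntegral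

lemma holder_aux {p : ℝ} (hp : 1 ≤ p) {u : ℝ → ℝ} (hu : Continuous u) (hun : ∀ x, 0 ≤ u x) :
    (1 / (2 * Real.pi)) * ∫ θ in (0:ℝ)..(2*Real.pi), u θ ≤
      ((1 / (2 * Real.pi)) * ∫ θ in (0:ℝ)..(2*Real.pi), u θ ^ p) ^ (1/p) := by
  have hπ : (0:ℝ) < 2 * Real.pi := by positivity
  rcases eq_or_lt_of_le hp with rfl | hp1
  · simp [Real.rpow_one]
  set μ : Measure ℝ := volume.restrict (Ioc (0:ℝ) (2*Real.pi)) with hμ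
  haveI : IsFiniteMeasure μ := by
    constructor
    rw [hμ, Measure.restrict_apply_univ, Real.volume_Ioc]
    exact ENNReal.ofReal_lt_top
  have hμuniv : (μ Set.univ).toReal = 2 * Real.pi := by
    rw [hμ, Measure.restrict_apply_univ, Real.volume_Ioc, ENNReal.toReal_ofReal (by linarith)]
    ring_nf
  set q : ℝ := p / (p - 1) with hq
  have hpq : p.HolderConjugate q := Real.HolderConjugate.conjExponent hp1
  obtain ⟨C, hC⟩ : ∃ C, ∀ x ∈ Icc (0:ℝ) (2*Real.pi), ‖u x‖ ≤ C :=
    isCompact_Icc.exists_bound_of_continuousOn hu.continuousOn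
  have hmem : MemLp u (ENNReal.ofReal p) μ := by
    refine MemLp.of_bound hu.aestronglyMeasurable C ?_
    rw [hμ]
    exact (ae_restrict_iff' measurableSet_Ioc).2 (Eventually.of_forall fun x hx =>
      hC x ⟨hx.1.le, hx.2⟩)
  have hmem1 : MemLp (fun _ : ℝ => (1:ℝ)) (ENNReal.ofReal q) μ := memLp_const 1
  have key := integral_mul_le_Lp_mul_Lq_of_nonneg (μ := μ) hpq
    (Eventually.of_forall hun) (Eventually.of_forall fun _ => zero_le_one) hmem hmem1
  simp only [mul_one, Real.one_rpow, MeasureTheory.integral_const, smul_eq_mul, measureReal_def, hμuniv] at key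
  have e1 : ∫ θ in (0:ℝ)..(2*Real.pi), u θ = ∫ a, u a ∂μ := by
    rw [intervalIntegral.integral_of_le hπ.le]
  have e2 : ∫ θ in (0:ℝ)..(2*Real.pi), u θ ^ p = ∫ a, u a ^ p ∂μ := by
    rw [intervalIntegral.integral_of_le hπ.le]
  rw [e1, e2]
  have hIp : 0 ≤ ∫ a, u a ^ p ∂μ :=
    integral_nonneg fun x => Real.rpow_nonneg (hun x) p
  have hexp : 1/q = 1 - 1/p := by
    have := hpq.inv_add_inv_eq_one
    simp only [one_div]
    linarith [hpq.inv_add_inv_eq_one]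
  calc (1 / (2*Real.pi)) * ∫ a, u a ∂μ
      ≤ (1 / (2*Real.pi)) * ((∫ a, u a ^ p ∂μ) ^ (1/p) * (2*Real.pi) ^ (1/q)) := by
        apply mul_le_mul_of_nonneg_left key (by positivity)
    _ = ((1 / (2*Real.pi)) * ∫ a, u a ^ p ∂μ) ^ (1/p) := by
        rw [Real.mul_rpow (by positivity) hIp, one_div, Real.inv_rpow hπ.le, hexp,
          Real.rpow_sub hπ]
        field_simp
        rw [Real.rpow_one, mul_comm]


lemma cauchy_pointwise {h : ℂ → ℂ} (hd : DifferentiableOn ℂ h (ball (0:ℂ) 1))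
    {r : ℝ} (hr0 : 0 < r) (hr1 : r < 1) {w : ℂ} (hw : ‖w‖ < r) :
    ‖h w‖ ≤ (r / (r - ‖w‖)) * ((1 / (2 * Real.pi)) *
      ∫ θ in (0:ℝ)..(2*Real.pi), ‖h ((r:ℂ) * Complex.exp (θ * Complex.I))‖) := by
  have hπ : (0:ℝ) < 2 * Real.pi := by positivity
  have hwr : 0 < r - ‖w‖ := by linarith
  have hcm : ∀ θ : ℝ, circleMap 0 r θ = (r:ℂ) * Complex.exp (θ * Complex.I) := fun θ => by
    simp [circleMap]
  have hnormcm : ∀ θ : ℝ, ‖circleMap 0 r θ‖ = r := fun θ => by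
    rw [norm_circleMap_zero, abs_of_pos hr0]
  have hmaps : ∀ θ : ℝ, circleMap 0 r θ ∈ ball (0:ℂ) 1 := fun θ => by
    rw [mem_ball_zero_iff, hnormcm]; exact hr1
  have hlow : ∀ θ : ℝ, r - ‖w‖ ≤ ‖circleMap 0 r θ - w‖ := fun θ => by
    have := norm_sub_norm_le (circleMap 0 r θ) w
    rw [hnormcm] at this; linarith
  have hne : ∀ θ : ℝ, circleMap 0 r θ - w ≠ 0 := fun θ => by
    intro h0
    have := hlow θ
    rw [h0, norm_zero] at this; linarith
  have hch : Continuous fun θ : ℝ => h (circleMap 0 r θ) :=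
    hd.continuousOn.comp_continuous (continuous_circleMap 0 r) hmaps
  have hdc : DiffContOnCl ℂ h (ball (0:ℂ) r) :=
    ⟨hd.mono (ball_subset_ball hr1.le),
      hd.continuousOn.mono (by rw [closure_ball (0:ℂ) hr0.ne']; exact closedBall_subset_ball hr1)⟩
  have key := hdc.circleIntegral_sub_inv_smul (mem_ball_zero_iff.2 hw)
  have hnorm2pi : ‖((2 * Real.pi * Complex.I : ℂ))‖ = 2 * Real.pi := by
    simp [norm_mul, Real.pi_pos.le, abs_of_nonneg]
  have hbound : ∀ θ ∈ Icc (0:ℝ) (2*Real.pi),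
      ‖deriv (circleMap 0 r) θ • ((circleMap 0 r θ - w)⁻¹ • h (circleMap 0 r θ))‖ ≤
        (r / (r - ‖w‖)) * ‖h (circleMap 0 r θ)‖ := by
    intro θ _
    have e1 : ‖deriv (circleMap 0 r) θ‖ = r := by
      rw [deriv_circleMap, norm_mul, hnormcm, Complex.norm_I, mul_one]
    rw [norm_smul, norm_smul, e1, norm_inv]
    calc r * (‖circleMap 0 r θ - w‖⁻¹ * ‖h (circleMap 0 r θ)‖)
        ≤ r * ((r - ‖w‖)⁻¹ * ‖h (circleMap 0 r θ)‖) :=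
          mul_le_mul_of_nonneg_left
            (mul_le_mul_of_nonneg_right (inv_anti₀ hwr (hlow θ)) (norm_nonneg _)) hr0.le
      _ = (r / (r - ‖w‖)) * ‖h (circleMap 0 r θ)‖ := by ring
  have hint1 : IntervalIntegrable (fun θ : ℝ =>
      ‖deriv (circleMap 0 r) θ • ((circleMap 0 r θ - w)⁻¹ • h (circleMap 0 r θ))‖)
      volume 0 (2*Real.pi) := by
    apply Continuous.intervalIntegrable
    have c1 : Continuous fun θ : ℝ => deriv (circleMap 0 r) θ := by
      simp only [deriv_circleMap]
      exact (continuous_circleMap 0 r).mul continuous_const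
    exact (c1.smul ((((continuous_circleMap 0 r).sub continuous_const).inv₀ hne).smul hch)).norm
  have hint2 : IntervalIntegrable (fun θ : ℝ => (r / (r - ‖w‖)) * ‖h (circleMap 0 r θ)‖)
      volume 0 (2*Real.pi) :=
    (continuous_const.mul hch.norm).intervalIntegrable _ _
  have hcircle : (∮ z in C(0, r), (z - w)⁻¹ • h z) = ∫ θ in (0:ℝ)..(2*Real.pi),
      deriv (circleMap 0 r) θ • ((circleMap 0 r θ - w)⁻¹ • h (circleMap 0 r θ)) := rfl
  have hIneq : ‖∮ z in C(0, r), (z - w)⁻¹ • h z‖ ≤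
      ∫ θ in (0:ℝ)..(2*Real.pi), (r / (r - ‖w‖)) * ‖h (circleMap 0 r θ)‖ := by
    rw [hcircle]
    refine le_trans (intervalIntegral.norm_integral_le_integral_norm hπ.le) ?_
    exact intervalIntegral.integral_mono_on hπ.le hint1 hint2 hbound
  have heq : ‖h w‖ = (1/(2*Real.pi)) * ‖∮ z in C(0, r), (z - w)⁻¹ • h z‖ := by
    rw [key, norm_smul, hnorm2pi]
    field_simp
  rw [heq]
  calc (1/(2*Real.pi)) * ‖∮ z in C(0, r), (z - w)⁻¹ • h z‖
      ≤ (1/(2*Real.pi)) * ∫ θ in (0:ℝ)..(2*Real.pi), (r / (r - ‖w‖)) * ‖h (circleMap 0 r θ)‖ :=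
        mul_le_mul_of_nonneg_left hIneq (by positivity)
    _ = (r / (r - ‖w‖)) * ((1/(2*Real.pi)) *
        ∫ θ in (0:ℝ)..(2*Real.pi), ‖h ((r:ℂ) * Complex.exp (θ * Complex.I))‖) := by
        simp only [hcm]
        rw [intervalIntegral.integral_const_mul]
        ring


lemma kern_main {ρ q : ℝ} (hρ0 : 0 ≤ ρ) (hρ1 : ρ < 1) (hq : 2 ≤ q) :
    ∫ θ in (-Real.pi)..Real.pi, ‖1 - (ρ:ℂ) * Complex.exp (θ * Complex.I)‖ ^ (-q) ≤
      (2 * (2*Real.pi)^q + 2) * (1-ρ) ^ (1-q) := by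
  have hπ := Real.pi_pos
  set d : ℝ := 1 - ρ with hd
  have hd0 : 0 < d := by rw [hd]; linarith
  have hd1 : d ≤ 1 := by rw [hd]; linarith
  have hdπ : d ≤ Real.pi := le_trans hd1 (by linarith [Real.pi_gt_three])
  set f : ℝ → ℝ := fun θ => ‖1 - (ρ:ℂ) * Complex.exp (θ * Complex.I)‖ ^ (-q) with hf
  have hnorm1 : ∀ θ:ℝ, ‖((ρ:ℂ) * Complex.exp (θ * Complex.I))‖ = ρ := fun θ => by
    rw [norm_mul, Complex.norm_exp_ofReal_mul_I,
      Complex.norm_real, Real.norm_eq_abs, _root_.abs_of_nonneg hρ0, mul_one]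
  have claim0 : ∀ θ:ℝ, d ≤ ‖1 - (ρ:ℂ) * Complex.exp (θ * Complex.I)‖ := fun θ => by
    have h1 := norm_sub_norm_le (1:ℂ) ((ρ:ℂ) * Complex.exp (θ * Complex.I))
    rw [norm_one, hnorm1] at h1
    linarith
  have hpos : ∀ θ:ℝ, (0:ℝ) < ‖1 - (ρ:ℂ) * Complex.exp (θ * Complex.I)‖ :=
    fun θ => lt_of_lt_of_le hd0 (claim0 θ)
  have hbase : Continuous fun θ:ℝ => ‖1 - (ρ:ℂ) * Complex.exp (θ * Complex.I)‖ :=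
    (continuous_const.sub (continuous_const.mul
      (Complex.continuous_exp.comp (Complex.continuous_ofReal.mul continuous_const)))).norm
  have hcont : Continuous f := hbase.rpow_const (fun θ => Or.inl (hpos θ).ne')
  have hfint : ∀ a b : ℝ, IntervalIntegrable f volume a b :=
    fun a b => hcont.intervalIntegrable a b
  have claim2 : ∀ θ ∈ Icc (0:ℝ) Real.pi,
      θ/(2*Real.pi) ≤ ‖1 - (ρ:ℂ) * Complex.exp (θ * Complex.I)‖ := by
    intro θ hθ
    rcases le_or_gt ρ (1/2) with hc | hc
    · have h2 : θ/(2*Real.pi) ≤ 1/2 := by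
        rw [div_le_iff₀ (by positivity)]; nlinarith [hθ.2]
      have h3 : (1:ℝ)/2 ≤ d := by rw [hd]; linarith
      linarith [claim0 θ]
    · have hsin : θ/Real.pi ≤ Real.sin (θ/2) := by
        have := Real.mul_le_sin (x := θ/2) (by linarith [hθ.1]) (by linarith [hθ.2])
        calc θ/Real.pi = 2/Real.pi * (θ/2) := by field_simp
          _ ≤ Real.sin (θ/2) := this
      have hhalf : Real.sin (θ/2)^2 = (1 - Real.cos θ)/2 := by
        have h1 := Real.sin_sq (θ/2)
        have h2 := Real.cos_sq (θ/2)
        rw [show 2*(θ/2) = θ by ring] at h2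
        linarith
      have h1 : (θ/Real.pi)^2 ≤ Real.sin (θ/2)^2 :=
        pow_le_pow_left₀ (div_nonneg hθ.1 hπ.le) hsin 2
      have hsq : ‖1 - (ρ:ℂ) * Complex.exp (θ * Complex.I)‖^2 =
          (1 - ρ*Real.cos θ)^2 + (ρ*Real.sin θ)^2 := by
        rw [Complex.sq_norm, Complex.normSq_apply]
        simp [Complex.sub_re, Complex.sub_im, Complex.mul_re, Complex.mul_im,
          Complex.exp_ofReal_mul_I_re, Complex.exp_ofReal_mul_I_im]
        ring
      have hn := hpos θ
      have hθπ : 0 ≤ θ/Real.pi := div_nonneg hθ.1 hπ.le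
      have e : ‖1 - (ρ:ℂ) * Complex.exp (θ * Complex.I)‖^2 =
          (1-ρ)^2 + 2*ρ*(1 - Real.cos θ) := by
        rw [hsq]; linear_combination (ρ^2) * Real.sin_sq_add_cos_sq θ
      have h2 : 2*(θ/Real.pi)^2 ≤ 1 - Real.cos θ := by linarith
      have h3 : (θ/(2*Real.pi))^2 * 4 = (θ/Real.pi)^2 := by field_simp; ring
      have hprod : 0 ≤ (2*ρ - 1) * (1 - Real.cos θ) :=
        mul_nonneg (by linarith) (by nlinarith [sq_nonneg (θ/Real.pi)])
      have hN2 : (θ/(2*Real.pi))^2 ≤ ‖1 - (ρ:ℂ) * Complex.exp (θ * Complex.I)‖^2 := by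
        nlinarith [sq_nonneg (1-ρ), sq_nonneg (θ/Real.pi)]
      calc θ/(2*Real.pi) = Real.sqrt ((θ/(2*Real.pi))^2) := (Real.sqrt_sq (div_nonneg hθ.1 (by positivity))).symm
        _ ≤ Real.sqrt (‖1 - (ρ:ℂ) * Complex.exp (θ * Complex.I)‖^2) := Real.sqrt_le_sqrt hN2
        _ = ‖1 - (ρ:ℂ) * Complex.exp (θ * Complex.I)‖ := Real.sqrt_sq hn.le
  have hfe : ∀ θ:ℝ, f (-θ) = f θ := by
    intro θ
    have hconj : (1 - (ρ:ℂ) * Complex.exp ((-θ:ℝ) * Complex.I)) =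
        (starRingEnd ℂ) (1 - (ρ:ℂ) * Complex.exp ((θ:ℝ) * Complex.I)) := by
      rw [map_sub, map_one, map_mul, Complex.conj_ofReal, ← Complex.exp_conj]
      congr 1
      simp [Complex.ofReal_neg]
    have hnorm : ‖1 - (ρ:ℂ) * Complex.exp ((-θ:ℝ) * Complex.I)‖ =
        ‖1 - (ρ:ℂ) * Complex.exp ((θ:ℝ) * Complex.I)‖ := by
      rw [hconj, RCLike.norm_conj]
    simp only [hf]
    rw [hnorm]
  -- middle piece
  have hmid : ∫ θ in (-d)..d, f θ ≤ 2 * d^(1-q) := by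
    have hb : ∀ θ ∈ Icc (-d) d, f θ ≤ d^(-q) := fun θ _ =>
      Real.rpow_le_rpow_of_nonpos hd0 (claim0 θ) (by linarith)
    calc ∫ θ in (-d)..d, f θ ≤ ∫ θ in (-d)..d, d^(-q) :=
          intervalIntegral.integral_mono_on (by linarith) (hfint _ _)
            intervalIntegrable_const hb
      _ = (2*d) * d^(-q) := by rw [intervalIntegral.integral_const, smul_eq_mul]; ring_nf
      _ = 2 * d^(1-q) := by
          rw [show (1-q) = 1 + -q by ring, Real.rpow_add hd0, Real.rpow_one]; ring
  -- right piece
  have hright : ∫ θ in d..Real.pi, f θ ≤ (2*Real.pi)^q * d^(1-q) := by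
    have hmaj : ∀ θ ∈ Icc d Real.pi, f θ ≤ (2*Real.pi)^q * θ^(-q) := by
      intro θ hθ
      have hθ0 : 0 < θ := lt_of_lt_of_le hd0 hθ.1
      have h1 : θ/(2*Real.pi) ≤ ‖1 - (ρ:ℂ) * Complex.exp (θ * Complex.I)‖ :=
        claim2 θ ⟨hθ0.le, hθ.2⟩
      have h2 : f θ ≤ (θ/(2*Real.pi))^(-q) :=
        Real.rpow_le_rpow_of_nonpos (by positivity) h1 (by linarith)
      calc f θ ≤ (θ/(2*Real.pi))^(-q) := h2
        _ = (2*Real.pi)^q * θ^(-q) := by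
            rw [Real.div_rpow hθ0.le (by positivity), Real.rpow_neg (by positivity : (0:ℝ) ≤ 2*Real.pi)]
            field_simp
    have hmajint : IntervalIntegrable (fun θ => (2*Real.pi)^q * θ^(-q)) volume d Real.pi := by
      apply IntervalIntegrable.const_mul
      apply intervalIntegral.intervalIntegrable_rpow
      right
      intro h0
      rcases (Set.mem_uIcc.1 h0) with ⟨h1,_⟩|⟨h1,_⟩ <;> linarith
    calc ∫ θ in d..Real.pi, f θ ≤ ∫ θ in d..Real.pi, (2*Real.pi)^q * θ^(-q) :=
          intervalIntegral.integral_mono_on hdπ (hfint _ _) hmajint hmaj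
      _ = (2*Real.pi)^q * ∫ θ in d..Real.pi, θ^(-q) := intervalIntegral.integral_const_mul _ _
      _ ≤ (2*Real.pi)^q * d^(1-q) := by
          apply mul_le_mul_of_nonneg_left _ (by positivity)
          rw [integral_rpow (Or.inr ⟨by intro h; linarith,
            by intro h0; rcases (Set.mem_uIcc.1 h0) with ⟨h1,_⟩|⟨h1,_⟩ <;> linarith⟩)]
          have hπq : (0:ℝ) ≤ Real.pi ^ (-q+1) := Real.rpow_nonneg hπ.le _
          have hdq : (0:ℝ) ≤ d ^ (-q+1) := Real.rpow_nonneg hd0.le _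
          rw [show (1-q) = -q+1 by ring]
          rw [div_le_iff_of_neg (by linarith : (-q+1:ℝ) < 0)]
          nlinarith [mul_nonneg (by linarith : (0:ℝ) ≤ q-2) hdq]
  -- left piece
  have hleft : ∫ θ in (-Real.pi)..(-d), f θ = ∫ θ in d..Real.pi, f θ := by
    have := intervalIntegral.integral_comp_neg (a := d) (b := Real.pi) f
    rw [← this]
    exact intervalIntegral.integral_congr (fun θ _ => (hfe θ))
  have hsplit : ∫ θ in (-Real.pi)..Real.pi, f θ =
      (∫ θ in (-Real.pi)..(-d), f θ) + ((∫ θ in (-d)..d, f θ) + (∫ θ in d..Real.pi, f θ)) := by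
    rw [intervalIntegral.integral_add_adjacent_intervals (hfint _ _) (hfint _ _),
      intervalIntegral.integral_add_adjacent_intervals (hfint _ _) (hfint _ _)]
  rw [hsplit, hleft]
  have hdq : (0:ℝ) ≤ d^(1-q) := Real.rpow_nonneg hd0.le _
  nlinarith [hmid, hright]


lemma kern_reduce (a : ℂ) (q : ℝ) :
    ∫ θ in (0:ℝ)..(2*Real.pi), ‖1 - a * Complex.exp (θ * Complex.I)‖ ^ (-q) =
      ∫ θ in (-Real.pi)..Real.pi, ‖1 - ((‖a‖:ℝ):ℂ) * Complex.exp (θ * Complex.I)‖ ^ (-q) := by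
  set F : ℝ → ℝ := fun θ => ‖1 - ((‖a‖:ℝ):ℂ) * Complex.exp (θ * Complex.I)‖ ^ (-q) with hF
  have hper : Function.Periodic F (2*Real.pi) := by
    intro θ
    simp only [hF]
    congr 3
    push_cast
    rw [add_mul, Complex.exp_add, Complex.exp_two_pi_mul_I, mul_one]
  have h1 : ∀ θ:ℝ, 1 - a * Complex.exp (θ * Complex.I) =
      1 - ((‖a‖:ℝ):ℂ) * Complex.exp (((θ + Complex.arg a):ℝ) * Complex.I) := by
    intro θ
    congr 1
    rw [show (((θ + Complex.arg a):ℝ):ℂ) = (θ:ℂ) + (Complex.arg a : ℝ) by push_cast; ring,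
      add_mul, Complex.exp_add]
    nth_rewrite 1 [← Complex.norm_mul_exp_arg_mul_I a]
    ring
  calc ∫ θ in (0:ℝ)..(2*Real.pi), ‖1 - a * Complex.exp (θ * Complex.I)‖ ^ (-q)
      = ∫ θ in (0:ℝ)..(2*Real.pi), F (θ + Complex.arg a) := by
        apply intervalIntegral.integral_congr
        intro θ _
        simp only [hF]
        rw [h1 θ]
    _ = ∫ θ in (0 + Complex.arg a)..(2*Real.pi + Complex.arg a), F θ :=
        intervalIntegral.integral_comp_add_right F (Complex.arg a)
    _ = ∫ θ in (-Real.pi)..Real.pi, F θ := by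
        rw [show (0:ℝ) + Complex.arg a = Complex.arg a by ring,
          show 2*Real.pi + Complex.arg a = Complex.arg a + 2*Real.pi by ring]
        rw [hper.intervalIntegral_add_eq (Complex.arg a) (-Real.pi)]
        norm_num
        rw [show -Real.pi + 2*Real.pi = Real.pi by ring]



lemma Mp_nonneg (p r : ℝ) (f : ℂ → ℂ) : 0 ≤ Mp p r f := by
  apply Real.rpow_nonneg
  apply mul_nonneg (by positivity)
  apply intervalIntegral.integral_nonneg (by positivity)
  intro θ _
  positivity

section test
variable {p α : ℝ}

/-- The Mp norm of the test function. -/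
lemma test_Mp_bound (hp : 1 ≤ p) {z : ℂ} (hz : ‖z‖ < 1) (s : ℕ) (hs2 : 2 ≤ (s:ℝ)*p)
    {r : ℝ} (hr0 : 0 ≤ r) (hr1 : r < 1) :
    Mp p r (fun w => ((1 - (starRingEnd ℂ) z * w)⁻¹)^s) ≤
      ((1/(2*Real.pi)) * (2 * (2*Real.pi)^((s:ℝ)*p) + 2))^(1/p) * (1 - r*‖z‖)^(1/p - (s:ℝ)) := by
  have hp0 : 0 < p := lt_of_lt_of_le one_pos hp
  have hπ : (0:ℝ) < 2*Real.pi := by positivity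
  set a : ℂ := (starRingEnd ℂ) z * (r:ℂ) with ha
  have hanorm : ‖a‖ = r * ‖z‖ := by
    rw [ha, norm_mul, RCLike.norm_conj, Complex.norm_real, Real.norm_eq_abs,
      _root_.abs_of_nonneg hr0, mul_comm]
  have haro : r * ‖z‖ < 1 := by nlinarith [norm_nonneg z]
  have hra : 0 < 1 - r*‖z‖ := by linarith
  -- pointwise norm identity
  have hkey : ∀ θ : ℝ, ‖(fun w => ((1 - (starRingEnd ℂ) z * w)⁻¹)^s)
      ((r:ℂ) * Complex.exp (θ * Complex.I))‖ ^ p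
      = ‖1 - a * Complex.exp (θ * Complex.I)‖ ^ (-((s:ℝ)*p)) := by
    intro θ
    simp only
    have hmul : (starRingEnd ℂ) z * ((r:ℂ) * Complex.exp (θ * Complex.I)) =
        a * Complex.exp (θ * Complex.I) := by rw [ha]; ring
    rw [hmul, norm_pow, norm_inv]
    have hx : (0:ℝ) < ‖1 - a * Complex.exp (θ * Complex.I)‖ := by
      have h1 : ‖a * Complex.exp (θ * Complex.I)‖ = r * ‖z‖ := by
        rw [norm_mul, Complex.norm_exp_ofReal_mul_I,
          mul_one, hanorm]
      have := norm_sub_norm_le (1:ℂ) (a * Complex.exp (θ * Complex.I))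
      rw [norm_one, h1] at this
      linarith
    rw [← Real.rpow_natCast (‖1 - a * Complex.exp (θ * Complex.I)‖⁻¹) s,
      ← Real.rpow_neg_one (‖1 - a * Complex.exp (θ * Complex.I)‖),
      ← Real.rpow_mul hx.le, ← Real.rpow_mul hx.le]
    congr 1
    ring
  rw [Mp]
  have hint : (∫ θ in (0:ℝ)..(2*Real.pi), ‖(fun w => ((1 - (starRingEnd ℂ) z * w)⁻¹)^s)
      ((r:ℂ) * Complex.exp (θ * Complex.I))‖ ^ p)
      = ∫ θ in (0:ℝ)..(2*Real.pi), ‖1 - a * Complex.exp (θ * Complex.I)‖ ^ (-((s:ℝ)*p)) := by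
    apply intervalIntegral.integral_congr
    intro θ _
    exact hkey θ
  rw [hint, kern_reduce a ((s:ℝ)*p), hanorm]
  have hbound := kern_main (ρ := r * ‖z‖) (by positivity) haro hs2
  calc ((1/(2*Real.pi)) * ∫ θ in (-Real.pi)..Real.pi,
        ‖1 - ((r*‖z‖:ℝ):ℂ) * Complex.exp (θ * Complex.I)‖ ^ (-((s:ℝ)*p)))^(1/p)
      ≤ ((1/(2*Real.pi)) * ((2 * (2*Real.pi)^((s:ℝ)*p) + 2) * (1-r*‖z‖)^(1-(s:ℝ)*p)))^(1/p) := by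
        apply Real.rpow_le_rpow _ _ (by positivity)
        · apply mul_nonneg (by positivity)
          apply intervalIntegral.integral_nonneg (by linarith [Real.pi_pos])
          intro θ _
          positivity
        · exact mul_le_mul_of_nonneg_left hbound (by positivity)
    _ = ((1/(2*Real.pi)) * (2 * (2*Real.pi)^((s:ℝ)*p) + 2))^(1/p) * (1 - r*‖z‖)^(1/p - (s:ℝ)) := by
        rw [show (1/(2*Real.pi)) * ((2 * (2*Real.pi)^((s:ℝ)*p) + 2) * (1-r*‖z‖)^(1-(s:ℝ)*p))
            = ((1/(2*Real.pi)) * (2 * (2*Real.pi)^((s:ℝ)*p) + 2)) * (1-r*‖z‖)^(1-(s:ℝ)*p) by ring,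
          Real.mul_rpow (by positivity) (Real.rpow_nonneg hra.le _),
          ← Real.rpow_mul hra.le]
        congr 1
        field_simp
end test

end Aux

set_option maxHeartbeats 1000000 in
/-- no nontrivial semigroup induces a strongly continuous semigroup of
weighted composition operators on `H(p,∞,α)`: if `G` is the generator of a semigroup
`{φ_t}` of analytic self-maps of the disk and the multiplier `f ↦ G·f` maps
`H(p,∞,α)` boundedly into `H(p,∞,α−1)`, then `G ≡ 0`. -/
theorem stmt13 (p α : ℝ) (hp : 1 ≤ p) (hα : 0 < α)
    (φ : ℝ → ℂ → ℂ) (G : ℂ → ℂ)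
    (hφ0 : ∀ z ∈ ball (0:ℂ) 1, φ 0 z = z)
    (hφsem : ∀ t ≥ (0:ℝ), ∀ s ≥ (0:ℝ), ∀ z ∈ ball (0:ℂ) 1, φ (t + s) z = φ t (φ s z))
    (hφa : ∀ t ≥ (0:ℝ), DifferentiableOn ℂ (φ t) (ball (0:ℂ) 1))
    (hφm : ∀ t ≥ (0:ℝ), ∀ z ∈ ball (0:ℂ) 1, φ t z ∈ ball (0:ℂ) 1)
    (hGa : DifferentiableOn ℂ G (ball (0:ℂ) 1))
    (hG : ∀ z ∈ ball (0:ℂ) 1,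
      Tendsto (fun t => (φ t z - z) / (t : ℂ)) (nhdsWithin 0 (Ioi 0)) (nhds (G z)))
    (M : ℝ)
    (hmult : ∀ f : ℂ → ℂ, DifferentiableOn ℂ f (ball (0:ℂ) 1) →
      ∀ B : ℝ, (∀ r ∈ Ico (0:ℝ) 1, (1 - r) ^ α * Mp p r f ≤ B) →
      ∀ r ∈ Ico (0:ℝ) 1, (1 - r) ^ (α - 1) * Mp p r (fun z => G z * f z) ≤ M * B) :
    ∀ z ∈ ball (0:ℂ) 1, G z = 0 := by
  have hp0 : 0 < p := lt_of_lt_of_le one_pos hp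
  have hπ : (0:ℝ) < 2*Real.pi := by positivity
  set s : ℕ := ⌈α⌉₊ + 2 with hs
  have hsα : α + 1 ≤ (s:ℝ) := by
    have h1 : α ≤ (⌈α⌉₊:ℝ) := Nat.le_ceil α
    rw [hs]
    push_cast
    linarith
  have hs2 : 2 ≤ (s:ℝ)*p := by
    have h1 : (2:ℝ) ≤ (s:ℝ) := by
      rw [hs]; push_cast
      have : (0:ℝ) ≤ (⌈α⌉₊:ℝ) := Nat.cast_nonneg _
      linarith
    nlinarith
  set C₁ : ℝ := ((1/(2*Real.pi)) * (2 * (2*Real.pi)^((s:ℝ)*p) + 2))^(1/p) with hC₁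
  have hC₁pos : 0 < C₁ := Real.rpow_pos_of_pos (by positivity) _
  set K : ℝ := M * C₁ * 2^((s:ℝ) + α) with hK
  have key : ∀ z ∈ ball (0:ℂ) 1, ‖G z‖ ≤ K * (1 - ‖z‖)^(1/p) := by
    intro z hz
    rw [mem_ball_zero_iff] at hz
    set d : ℝ := 1 - ‖z‖ with hd
    have hd0 : 0 < d := by rw [hd]; linarith
    have hz0 : 0 ≤ ‖z‖ := norm_nonneg z
    set g : ℂ → ℂ := fun w => ((1 - (starRingEnd ℂ) z * w)⁻¹)^s with hg
    have hgd : DifferentiableOn ℂ g (ball (0:ℂ) 1) := by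
      apply DifferentiableOn.pow
      apply DifferentiableOn.inv
      · exact (differentiableOn_const _).sub
          (((differentiable_const _).mul differentiable_id).differentiableOn)
      · intro w hw
        rw [mem_ball_zero_iff] at hw
        intro h0
        have h1 : ‖(starRingEnd ℂ) z * w‖ < 1 := by
          rw [norm_mul, RCLike.norm_conj]; nlinarith
        rw [sub_eq_zero] at h0
        rw [← h0] at h1
        simp at h1
    have hB : ∀ r ∈ Ico (0:ℝ) 1, (1 - r)^α * Mp p r g ≤ C₁ * d^(α + 1/p - (s:ℝ)) := by
      rintro r ⟨hr0, hr1⟩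
      have hra : 0 < 1 - r*‖z‖ := by nlinarith
      have h1 : Mp p r g ≤ C₁ * (1 - r*‖z‖)^(1/p - (s:ℝ)) := test_Mp_bound hp hz s hs2 hr0 hr1
      have h2 : (1-r)^α ≤ (1 - r*‖z‖)^α :=
        Real.rpow_le_rpow (by linarith) (by nlinarith) hα.le
      calc (1-r)^α * Mp p r g ≤ (1 - r*‖z‖)^α * (C₁ * (1 - r*‖z‖)^(1/p - (s:ℝ))) :=
            mul_le_mul h2 h1 (Mp_nonneg _ _ _) (Real.rpow_nonneg hra.le _)
        _ = C₁ * (1 - r*‖z‖)^(α + (1/p - (s:ℝ))) := by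
            rw [Real.rpow_add hra]; ring
        _ ≤ C₁ * d^(α + 1/p - (s:ℝ)) := by
            apply mul_le_mul_of_nonneg_left _ hC₁pos.le
            rw [show α + (1/p - (s:ℝ)) = α + 1/p - (s:ℝ) by ring]
            apply Real.rpow_le_rpow_of_nonpos hd0 (by rw [hd]; nlinarith)
            have hip : 1/p ≤ 1 := by
              rw [div_le_one hp0]; exact hp
            linarith
    have hGg := hmult g hgd (C₁ * d^(α + 1/p - (s:ℝ))) hB
    set r : ℝ := (1 + ‖z‖)/2 with hr
    have hzr : ‖z‖ < r := by rw [hr]; linarith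
    have hr1 : r < 1 := by rw [hr]; linarith
    have hr0 : 0 < r := by rw [hr]; linarith
    have hrmem : r ∈ Ico (0:ℝ) 1 := ⟨hr0.le, hr1⟩
    have hone_r : 1 - r = d/2 := by rw [hr, hd]; ring
    have hrz : r - ‖z‖ = d/2 := by rw [hr, hd]; ring
    have h1r : (0:ℝ) < 1 - r := by linarith
    have hBz0 : 0 < C₁ * d^(α + 1/p - (s:ℝ)) :=
      mul_pos hC₁pos (Real.rpow_pos_of_pos hd0 _)
    have hM0 : 0 ≤ M := by
      have h := hGg r hrmem
      have hL : 0 ≤ (1-r)^(α-1) * Mp p r (fun w => G w * g w) :=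
        mul_nonneg (Real.rpow_nonneg h1r.le _) (Mp_nonneg _ _ _)
      nlinarith
    have hMp : Mp p r (fun w => G w * g w) ≤
        (1-r)^(1-α) * (M * (C₁ * d^(α + 1/p - (s:ℝ)))) := by
      have h := hGg r hrmem
      have hcancel : (1-r)^(1-α) * ((1-r)^(α-1) * Mp p r (fun w => G w * g w))
          = Mp p r (fun w => G w * g w) := by
        rw [← mul_assoc, ← Real.rpow_add h1r]
        norm_num
      calc Mp p r (fun w => G w * g w)
          = (1-r)^(1-α) * ((1-r)^(α-1) * Mp p r (fun w => G w * g w)) := hcancel.symm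
        _ ≤ (1-r)^(1-α) * (M * (C₁ * d^(α + 1/p - (s:ℝ)))) :=
            mul_le_mul_of_nonneg_left h (Real.rpow_nonneg h1r.le _)
    have hGgd : DifferentiableOn ℂ (fun w => G w * g w) (ball (0:ℂ) 1) := hGa.mul hgd
    have hcau := cauchy_pointwise hGgd hr0 hr1 hzr
    have hcurve : Continuous fun θ:ℝ => (r:ℂ) * Complex.exp (θ * Complex.I) :=
      continuous_const.mul (Complex.continuous_exp.comp
        (Complex.continuous_ofReal.mul continuous_const))
    have hmapsb : ∀ θ:ℝ, (r:ℂ) * Complex.exp (θ * Complex.I) ∈ ball (0:ℂ) 1 := by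
      intro θ
      rw [mem_ball_zero_iff, norm_mul,
        Complex.norm_exp_ofReal_mul_I, mul_one, Complex.norm_real, Real.norm_eq_abs,
        abs_of_pos hr0]
      exact hr1
    have hu : Continuous fun θ:ℝ =>
        ‖(fun w => G w * g w) ((r:ℂ) * Complex.exp (θ * Complex.I))‖ :=
      (hGgd.continuousOn.comp_continuous hcurve hmapsb).norm
    have hhold := holder_aux hp hu (fun θ => norm_nonneg _)
    have hMp_def : Mp p r (fun w => G w * g w) = ((1/(2*Real.pi)) * ∫ θ in (0:ℝ)..(2*Real.pi),
        (fun θ:ℝ => ‖(fun w => G w * g w) ((r:ℂ) * Complex.exp (θ * Complex.I))‖) θ ^ p)^(1/p) :=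
      rfl
    have hstep : ‖G z * g z‖ ≤
        (r/(r-‖z‖)) * ((1-r)^(1-α) * (M * (C₁ * d^(α + 1/p - (s:ℝ))))) := by
      refine le_trans hcau ?_
      apply mul_le_mul_of_nonneg_left _ (div_nonneg hr0.le (by linarith))
      refine le_trans hhold ?_
      rw [← hMp_def]
      exact hMp
    rw [hrz, hone_r] at hstep
    have hzsq : 0 < 1 - ‖z‖^2 := by nlinarith
    have hgz : ‖g z‖ = ((1 - ‖z‖^2)⁻¹)^s := by
      rw [hg]
      simp only
      rw [norm_pow, norm_inv]
      congr 2
      have hcz : (starRingEnd ℂ) z * z = ((‖z‖^2 : ℝ) : ℂ) := by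
        rw [mul_comm, Complex.mul_conj]
        norm_cast
        rw [Complex.normSq_eq_norm_sq]
      rw [hcz, ← Complex.ofReal_one, ← Complex.ofReal_sub, Complex.norm_real,
        Real.norm_eq_abs, abs_of_pos hzsq]
    have hGzeq : ‖G z‖ = ‖G z * g z‖ * (1 - ‖z‖^2)^s := by
      rw [norm_mul, hgz, inv_pow, mul_assoc,
        inv_mul_cancel₀ (pow_ne_zero s (ne_of_gt hzsq)), mul_one]
    have h2part : (2:ℝ) * 2^((s:ℝ)) * 2^(α-1) = 2^((s:ℝ)+α) := by
      nth_rewrite 1 [show (2:ℝ) = 2^(1:ℝ) by rw [Real.rpow_one]]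
      rw [← Real.rpow_add two_pos, ← Real.rpow_add two_pos]
      congr 1
      ring
    have hdpart : d⁻¹ * d^(1-α) * d^(α + 1/p - (s:ℝ)) * d^((s:ℝ)) = d^(1/p) := by
      rw [← Real.rpow_neg_one d, ← Real.rpow_add hd0, ← Real.rpow_add hd0,
        ← Real.rpow_add hd0]
      congr 1
      ring
    have heq : (2/d) * ((d/2)^(1-α) * (M * (C₁ * d^(α + 1/p - (s:ℝ))))) * (2*d)^s
        = K * d^(1/p) := by
      have hinv : ((2:ℝ)^((1:ℝ)-α))⁻¹ = (2:ℝ)^(α-1) := by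
        rw [← Real.rpow_neg two_pos.le]
        congr 1
        ring
      rw [← Real.rpow_natCast (2*d) s, Real.mul_rpow two_pos.le hd0.le,
        Real.div_rpow hd0.le two_pos.le, hK, ← h2part, ← hdpart,
        div_eq_mul_inv (2:ℝ) d, div_eq_mul_inv (d ^ ((1:ℝ)-α)) _, hinv]
      ring
    calc ‖G z‖ = ‖G z * g z‖ * (1 - ‖z‖^2)^s := hGzeq
      _ ≤ ((r/(d/2)) * ((d/2)^(1-α) * (M * (C₁ * d^(α + 1/p - (s:ℝ)))))) * (1 - ‖z‖^2)^s :=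
          mul_le_mul_of_nonneg_right hstep (pow_nonneg hzsq.le s)
      _ ≤ ((2/d) * ((d/2)^(1-α) * (M * (C₁ * d^(α + 1/p - (s:ℝ)))))) * (2*d)^s := by
          apply mul_le_mul _ _ (pow_nonneg hzsq.le s) _
          · apply mul_le_mul_of_nonneg_right _ (mul_nonneg (Real.rpow_nonneg (by positivity) _)
              (mul_nonneg hM0 hBz0.le))
            rw [div_le_div_iff₀ (by positivity) hd0]
            nlinarith
          · exact pow_le_pow_left₀ hzsq.le (by nlinarith) s
          · apply mul_nonneg (by positivity)
            exact mul_nonneg (Real.rpow_nonneg (by positivity) _) (mul_nonneg hM0 hBz0.le)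
      _ = K * d^(1/p) := heq
  intro z hz
  rw [mem_ball_zero_iff] at hz
  have hbnd : ∀ ρ ∈ Ioo (‖z‖) 1, ‖G z‖ ≤ K * (1-ρ)^(1/p) := by
    intro ρ hρ
    have hρ0 : 0 < ρ := lt_of_le_of_lt (norm_nonneg z) hρ.1
    have hdc : DiffContOnCl ℂ G (ball (0:ℂ) ρ) :=
      ⟨hGa.mono (ball_subset_ball hρ.2.le), hGa.continuousOn.mono
        (by rw [closure_ball (0:ℂ) hρ0.ne']; exact closedBall_subset_ball hρ.2)⟩
    apply Complex.norm_le_of_forall_mem_frontier_norm_le isBounded_ball hdc ?_ ?_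
    · intro w hw
      rw [frontier_ball (0:ℂ) hρ0.ne'] at hw
      have hwn : ‖w‖ = ρ := by simpa [mem_sphere_iff_norm] using hw
      have hw1 : w ∈ ball (0:ℂ) 1 := by rw [mem_ball_zero_iff, hwn]; exact hρ.2
      calc ‖G w‖ ≤ K * (1-‖w‖)^(1/p) := key w hw1
        _ = K * (1-ρ)^(1/p) := by rw [hwn]
    · exact subset_closure (mem_ball_zero_iff.2 hρ.1)
  have hlim : Tendsto (fun ρ:ℝ => K * (1-ρ)^((1:ℝ)/p)) (nhdsWithin 1 (Iio 1)) (nhds 0) := by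
    have h1 : Tendsto (fun ρ:ℝ => 1-ρ) (nhdsWithin 1 (Iio 1)) (nhds 0) := by
      have h : Continuous (fun ρ:ℝ => 1-ρ) := continuous_const.sub continuous_id
      have h' := h.tendsto (1:ℝ)
      simp only [sub_self] at h'
      exact h'.mono_left nhdsWithin_le_nhds
    have h2 : ContinuousAt (fun x:ℝ => x ^ ((1:ℝ)/p)) 0 :=
      Real.continuousAt_rpow_const 0 (1/p) (Or.inr (by positivity))
    have h4 : Tendsto (fun ρ:ℝ => K * (1-ρ)^((1:ℝ)/p)) (nhdsWithin 1 (Iio 1))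
        (nhds (K * 0)) := by
      apply Tendsto.const_mul
      have h3 := h2.tendsto.comp h1
      rw [Real.zero_rpow (by positivity : (1:ℝ)/p ≠ 0)] at h3
      exact h3
    rw [mul_zero] at h4
    exact h4
  have hev : ∀ᶠ ρ in nhdsWithin (1:ℝ) (Iio 1), ‖G z‖ ≤ K * (1-ρ)^((1:ℝ)/p) := by
    filter_upwards [Ioo_mem_nhdsLT_of_mem (show (1:ℝ) ∈ Ioc (‖z‖) 1 from ⟨hz, le_refl 1⟩)]
      with ρ hρ
    exact hbnd ρ hρ
  have hle : ‖G z‖ ≤ 0 := ge_of_tendsto hlim hev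
  exact norm_le_zero_iff.1 hle
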